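/- arXiv:1511.00788 — 13 statements merged into one kernel-verified Lean document; each statement's English description precedes it below -/
import Mathlib

section
/- Let A and B be associative rings with identity, f : A → B a ring homomorphism, and J a proper two-sided ideal of B. If the amalgamation A⋈fJ is an Armendariz ring, then A is an Armendariz ring. -/
open Polynomial

/-- A ring `R` is Armendariz if whenever `p * q = 0` for polynomials over `R`,
every product of a coefficient of `p` with a coefficient of `q` is zero. -/
def IsArmendariz (R : Type*) [Ring R] : Prop :=
  ∀ p q : R[X], p * q = 0 → ∀ i j : ℕ, p.coeff i * q.coeff j = 0

/-- A ring `R` is nil-Armendariz if whenever every coefficient of `p * q` is nilpotent,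
every product of a coefficient of `p` with a coefficient of `q` is nilpotent. -/
def IsNilArmendariz (R : Type*) [Ring R] : Prop :=
  ∀ p q : R[X], (∀ k : ℕ, IsNilpotent ((p * q).coeff k)) →
    ∀ i j : ℕ, IsNilpotent (p.coeff i * q.coeff j)

/-- A ring `R` is weak Armendariz if whenever `p * q = 0` for polynomials over `R`,
every product of a coefficient of `p` with a coefficient of `q` is nilpotent. -/
def IsWeakArmendariz (R : Type*) [Ring R] : Prop :=
  ∀ p q : R[X], p * q = 0 → ∀ i j : ℕ, IsNilpotent (p.coeff i * q.coeff j)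

/-- The amalgamation `A ⋈^f J = {(a, f a + j) | a ∈ A, j ∈ J}` of `A` and `B` along the
two-sided ideal `J` with respect to `f`, as a subring of `A × B`.  (A pair `(a, b)` has the
form `(a, f a + j)` with `j ∈ J` iff `b - f a ∈ J`.) -/
def amalgamation {A B : Type*} [Ring A] [Ring B] (f : A →+* B) (J : TwoSidedIdeal B) :
    Subring (A × B) where
  carrier := {p | p.2 - f p.1 ∈ J}
  zero_mem' := by simp [J.zero_mem]
  one_mem' := by simp [J.zero_mem]
  add_mem' := by
    intro x y hx hy
    have e : (x + y).2 - f ((x + y).1) = (x.2 - f x.1) + (y.2 - f y.1) := by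
      simp only [Prod.snd_add, Prod.fst_add, map_add]; abel
    show (x + y).2 - f ((x + y).1) ∈ J
    rw [e]; exact J.add_mem hx hy
  neg_mem' := by
    intro x hx
    have e : (-x).2 - f ((-x).1) = -(x.2 - f x.1) := by
      simp only [Prod.snd_neg, Prod.fst_neg, map_neg]; abel
    show (-x).2 - f ((-x).1) ∈ J
    rw [e]; exact J.neg_mem hx
  mul_mem' := by
    intro x y hx hy
    have e : (x * y).2 - f ((x * y).1) = x.2 * (y.2 - f y.1) + (x.2 - f x.1) * f y.1 := by
      simp only [Prod.snd_mul, Prod.fst_mul, map_mul, mul_sub, sub_mul]; abel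
    show (x * y).2 - f ((x * y).1) ∈ J
    rw [e]; exact J.add_mem (J.mul_mem_left _ _ hy) (J.mul_mem_right _ _ hx)

/-- The subring `f(A) + J = {f a + j | a ∈ A, j ∈ J}` of `B`.  (An element `b` has the form
`f a + j` with `j ∈ J` iff `b - f a ∈ J` for some `a`.) -/
def imageAddIdeal {A B : Type*} [Ring A] [Ring B] (f : A →+* B) (J : TwoSidedIdeal B) :
    Subring B where
  carrier := {b | ∃ a : A, b - f a ∈ J}
  zero_mem' := ⟨0, by simp [J.zero_mem]⟩
  one_mem' := ⟨1, by simp [J.zero_mem]⟩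
  add_mem' := by
    rintro x y ⟨a, ha⟩ ⟨b, hb⟩
    refine ⟨a + b, ?_⟩
    have e : x + y - f (a + b) = (x - f a) + (y - f b) := by
      rw [map_add]; abel
    rw [e]; exact J.add_mem ha hb
  neg_mem' := by
    rintro x ⟨a, ha⟩
    refine ⟨-a, ?_⟩
    have e : -x - f (-a) = -(x - f a) := by rw [map_neg]; abel
    rw [e]; exact J.neg_mem ha
  mul_mem' := by
    rintro x y ⟨a, ha⟩ ⟨b, hb⟩
    refine ⟨a * b, ?_⟩
    have e : x * y - f (a * b) = x * (y - f b) + (x - f a) * f b := by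
      rw [map_mul, mul_sub, sub_mul]; abel
    rw [e]; exact J.add_mem (J.mul_mem_left _ _ hb) (J.mul_mem_right _ _ ha)

theorem stmt_0 {A B : Type*} [Ring A] [Ring B] (f : A →+* B) (J : TwoSidedIdeal B)
    (hJ : (1 : B) ∉ J)
    (h : IsArmendariz (amalgamation f J)) :
    IsArmendariz A := by
  intro p q hpq i j
  let ι : A →+* amalgamation f J :=
    { toFun := fun a => ⟨(a, f a), by show f a - f a ∈ J; simp [J.zero_mem]⟩
      map_one' := by ext <;> simp
      map_mul' := fun a b => by ext <;> simp
      map_zero' := by ext <;> simp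
      map_add' := fun a b => by ext <;> simp }
  have hmap : (p.map ι) * (q.map ι) = 0 := by
    rw [← Polynomial.map_mul, hpq, Polynomial.map_zero]
  have := h (p.map ι) (q.map ι) hmap i j
  have h1 := congrArg (fun x : amalgamation f J => (x : A × B).1) this
  simpa [ι, Polynomial.coeff_map] using h1
end

section
/- Let A and B be associative rings with identity, f : A → B a ring homomorphism, and J a proper two-sided ideal of B. If A and the subring f(A)+J of B are both Armendariz rings, then the amalgamation A⋈fJ is an Armendariz ring. -/
open Polynomial

theorem stmt_1 {A B : Type*} [Ring A] [Ring B] (f : A →+* B) (J : TwoSidedIdeal B)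
    (hJ : (1 : B) ∉ J)
    (hA : IsArmendariz A) (hB : IsArmendariz (imageAddIdeal f J)) :
    IsArmendariz (amalgamation f J) := by
  intro p q hpq i j
  let π₁ : amalgamation f J →+* A := (RingHom.fst A B).comp (amalgamation f J).subtype
  let π₂ : amalgamation f J →+* imageAddIdeal f J :=
    { toFun := fun x => ⟨x.val.2, x.val.1, x.property⟩
      map_one' := rfl
      map_mul' := fun _ _ => rfl
      map_zero' := rfl
      map_add' := fun _ _ => rfl }
  have h1 := hA (p.map π₁) (q.map π₁)
    (by rw [← Polynomial.map_mul, hpq, Polynomial.map_zero]) i j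
  have h2 := hB (p.map π₂) (q.map π₂)
    (by rw [← Polynomial.map_mul, hpq, Polynomial.map_zero]) i j
  rw [Polynomial.coeff_map, Polynomial.coeff_map, ← map_mul] at h1 h2
  have : ((p.coeff i * q.coeff j : amalgamation f J) : A × B) = 0 := by
    have h2' : ((π₂ (p.coeff i * q.coeff j) : imageAddIdeal f J) : B) = 0 := by
      rw [h2]; rfl
    exact Prod.ext h1 h2'
  exact Subtype.ext this
end

section
/- Let A and B be associative rings with identity, f : A → B a ring homomorphism, and J a proper two-sided ideal of B. Assume J contains a regular central element of B. Then the amalgamation A⋈fJ is an Armendariz ring if and only if both A and the subring f(A)+J of B are Armendariz rings. -/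
open Polynomial

namespace IsArmendariz

variable {R S : Type*} [Ring R] [Ring S]

theorem of_injective (g : R →+* S) (hg : Function.Injective g) (hS : IsArmendariz S) :
    IsArmendariz R := by
  intro p q hpq i j
  apply hg
  have h := hS (p.map g) (q.map g) (by rw [← Polynomial.map_mul, hpq, Polynomial.map_zero]) i j
  rwa [coeff_map, coeff_map, ← map_mul, ← map_zero g] at h

theorem prod (hR : IsArmendariz R) (hS : IsArmendariz S) : IsArmendariz (R × S) := by
  intro p q hpq i j
  have h₁ := hR (p.map (RingHom.fst R S)) (q.map (RingHom.fst R S))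
    (by rw [← Polynomial.map_mul, hpq, Polynomial.map_zero]) i j
  have h₂ := hS (p.map (RingHom.snd R S)) (q.map (RingHom.snd R S))
    (by rw [← Polynomial.map_mul, hpq, Polynomial.map_zero]) i j
  simp only [coeff_map, RingHom.coe_fst, RingHom.coe_snd] at h₁ h₂
  exact Prod.ext h₁ h₂

/-- Lift `p * q = 0` along `π`, multiply both lifts by `σ`: since `σ` kills `ker π` the lifted
product vanishes, and `σ² r = 0` forces `π r = 0` because `π σ` is left regular. -/
theorem of_surjective_of_central (π : R →+* S) (hπ : Function.Surjective π) (σ : R)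
    (hσ : ∀ r, σ * r = r * σ) (hker : ∀ r, π r = 0 → σ * r = 0)
    (hreg : ∀ y, π σ * y = 0 → y = 0) (hR : IsArmendariz R) : IsArmendariz S := by
  intro p q hpq i j
  obtain ⟨P, rfl⟩ := map_surjective π hπ p
  obtain ⟨Q, rfl⟩ := map_surjective π hπ q
  have hCσ : P * C σ = C σ * P := Polynomial.ext fun n => by rw [coeff_C_mul, coeff_mul_C, hσ]
  have hPQ : ∀ n, σ * (P * Q).coeff n = 0 := fun n => hker _ <| by
    rw [← coeff_map, Polynomial.map_mul, hpq, coeff_zero]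
  have hlift : C σ * P * (C σ * Q) = 0 := by
    rw [mul_assoc, ← mul_assoc P, hCσ, mul_assoc]
    exact Polynomial.ext fun n => by rw [coeff_C_mul, coeff_C_mul, hPQ, mul_zero, coeff_zero]
  have h := hR _ _ hlift i j
  rw [coeff_C_mul, coeff_C_mul, mul_assoc, ← mul_assoc (P.coeff i), ← hσ, mul_assoc] at h
  rw [coeff_map, coeff_map, ← map_mul]
  exact hreg _ <| hreg _ <| by rw [← map_mul, ← map_mul, h, map_zero]

end IsArmendariz

namespace amalgamation

variable {A B : Type*} [Ring A] [Ring B] (f : A →+* B) (J : TwoSidedIdeal B)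

theorem mem_iff {x : A × B} : x ∈ amalgamation f J ↔ x.2 - f x.1 ∈ J := Iff.rfl

def diag : A →+* amalgamation f J :=
  (RingHom.prod (RingHom.id A) f).codRestrict _ fun a => by simp [mem_iff, J.zero_mem]

theorem diag_injective : Function.Injective (diag f J) := fun _ _ h =>
  congrArg (fun x : amalgamation f J => (x : A × B).1) h

def sndHom : amalgamation f J →+* imageAddIdeal f J :=
  ((RingHom.snd A B).comp (amalgamation f J).subtype).codRestrict _ fun x => ⟨_, x.2⟩

theorem sndHom_surjective : Function.Surjective (sndHom f J) := by
  rintro ⟨b, a, hab⟩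
  exact ⟨⟨(a, b), hab⟩, rfl⟩

def toProd : amalgamation f J →+* A × imageAddIdeal f J :=
  RingHom.prod ((RingHom.fst A B).comp (amalgamation f J).subtype) (sndHom f J)

theorem toProd_injective : Function.Injective (toProd f J) := fun _ _ h =>
  Subtype.ext <| Prod.ext (Prod.ext_iff.mp h).1 (congrArg Subtype.val (Prod.ext_iff.mp h).2)

end amalgamation

theorem stmt_2_general {A B : Type*} [Ring A] [Ring B] (f : A →+* B) (J : TwoSidedIdeal B)
    (hs : ∃ s ∈ J, (∀ b : B, s * b = b * s) ∧
      (∀ b : B, s * b = 0 → b = 0) ∧ (∀ b : B, b * s = 0 → b = 0)) :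
    IsArmendariz (amalgamation f J) ↔ IsArmendariz A ∧ IsArmendariz (imageAddIdeal f J) := by
  obtain ⟨s, hsJ, hcomm, hreg, -⟩ := hs
  refine ⟨fun h => ⟨h.of_injective _ (amalgamation.diag_injective f J), ?_⟩,
    fun ⟨hA, hS⟩ => (hA.prod hS).of_injective _ (amalgamation.toProd_injective f J)⟩
  have hσ : ((0, s) : A × B) ∈ amalgamation f J := by simpa [amalgamation.mem_iff] using hsJ
  refine h.of_surjective_of_central _ (amalgamation.sndHom_surjective f J) ⟨_, hσ⟩ ?_ ?_ ?_
  · exact fun r => Subtype.ext <| Prod.ext (by simp) (hcomm _)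
  · intro r hr
    have hr₂ : (r : A × B).2 = 0 := congrArg Subtype.val hr
    exact Subtype.ext <| Prod.ext (zero_mul _) (by simp [hr₂])
  · exact fun y hy => Subtype.ext <| hreg _ (congrArg Subtype.val hy)

theorem stmt_2 {A B : Type*} [Ring A] [Ring B] (f : A →+* B) (J : TwoSidedIdeal B)
    (hJ : (1 : B) ∉ J)
    (hs : ∃ s ∈ J, (∀ b : B, s * b = b * s) ∧
      (∀ b : B, s * b = 0 → b = 0) ∧ (∀ b : B, b * s = 0 → b = 0)) :
    IsArmendariz (amalgamation f J) ↔ IsArmendariz A ∧ IsArmendariz (imageAddIdeal f J) :=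
  stmt_2_general f J hs
end

section
/- Let A and B be associative rings with identity, f : A → B a ring homomorphism, and J a proper two-sided ideal of B. Assume J ∩ nil(B) = {0}, i.e., the only nilpotent element of B lying in J is 0. Then the amalgamation A⋈fJ is an Armendariz ring if and only if A is an Armendariz ring. -/
open Polynomial

/-! A embeds in `A ⋈^f J` via `a ↦ (a, f a)`, and the Armendariz property passes to subrings.
Conversely, if `p * q = 0` over `A ⋈^f J`, the Armendariz property of `A` kills the first
components of the products of coefficients, so the products `bᵢ b'ⱼ` of second components lie in
`J`, and the classical argument for reduced rings runs inside `J`. Its engine: a square-zero `n`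
annihilates `J` on the left, because `n J n` and then `n J` consist of nilpotents of `J`.
Going through the pairs `(i, j)` by `i + j` and then by `j`, multiplying the relation
`∑_{i'+j'=i+j} bᵢ' b'ⱼ' = 0` by `b'ⱼ` on the left and by `x ∈ J` on the right leaves
`b'ⱼ (bᵢ b'ⱼ) x = 0`; with `x = bᵢ b'ⱼ` this makes `bᵢ b'ⱼ ∈ J` nilpotent, hence zero. -/

section ReducedIdeal

variable {B : Type*} [Ring B] {J : TwoSidedIdeal B}

theorem mul_eq_zero_of_mul_self_eq_zero_of_mem (hJ : ∀ b ∈ J, IsNilpotent b → b = 0)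
    {n x : B} (hn : n * n = 0) (hx : x ∈ J) : n * x = 0 := by
  have hnxn : n * x * n = 0 := by
    refine hJ _ (J.mul_mem_right _ _ (J.mul_mem_left _ _ hx)) ⟨2, ?_⟩
    calc (n * x * n) ^ 2 = n * x * (n * n) * x * n := by noncomm_ring
      _ = 0 := by rw [hn, mul_zero, zero_mul, zero_mul]
  refine hJ _ (J.mul_mem_left _ _ hx) ⟨2, ?_⟩
  calc (n * x) ^ 2 = n * x * n * x := by noncomm_ring
    _ = 0 := by rw [hnxn, zero_mul]

open Finset in
theorem coeff_mul_coeff_eq_zero_of_lower (hJ : ∀ b ∈ J, IsNilpotent b → b = 0)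
    {P Q : B[X]} (hPQ : P * Q = 0) {i j : ℕ}
    (hlower : ∀ i' j', i' + j' < i + j → P.coeff i' * Q.coeff j' = 0)
    (hleft : ∀ i' j', i' + j' = i + j → j' < j → P.coeff i' * Q.coeff j' = 0)
    (hmem : P.coeff i * Q.coeff j ∈ J) : P.coeff i * Q.coeff j = 0 := by
  have key : ∀ x ∈ J, Q.coeff j * (P.coeff i * Q.coeff j) * x = 0 := by
    intro x hx
    have hsum : ∑ c ∈ antidiagonal (i + j), Q.coeff j * (P.coeff c.1 * Q.coeff c.2) * x = 0 := by
      rw [← sum_mul, ← mul_sum, ← coeff_mul, hPQ, coeff_zero, mul_zero, zero_mul]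
    rwa [sum_eq_single_of_mem (i, j) (HasAntidiagonal.mem_antidiagonal.2 rfl)] at hsum
    rintro ⟨i', j'⟩ hc hne
    rw [HasAntidiagonal.mem_antidiagonal] at hc
    have hj : j' ≠ j := fun h => hne (by simp only [Prod.mk.injEq]; omega)
    rcases hj.lt_or_gt with hlt | hgt
    · rw [hleft i' j' hc hlt, mul_zero, zero_mul]
    · -- `i' < i`, so `Q.coeff j * P.coeff i'` squares to zero
      have hsq : Q.coeff j * P.coeff i' * (Q.coeff j * P.coeff i') = 0 := by
        calc _ = Q.coeff j * (P.coeff i' * Q.coeff j) * P.coeff i' := by noncomm_ring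
          _ = 0 := by rw [hlower i' j (by omega), mul_zero, zero_mul]
      calc Q.coeff j * (P.coeff i' * Q.coeff j') * x
          = Q.coeff j * P.coeff i' * (Q.coeff j' * x) := by noncomm_ring
        _ = 0 := mul_eq_zero_of_mul_self_eq_zero_of_mem hJ hsq (J.mul_mem_left _ _ hx)
  refine hJ _ hmem ⟨3, ?_⟩
  calc (P.coeff i * Q.coeff j) ^ 3
      = P.coeff i * (Q.coeff j * (P.coeff i * Q.coeff j) * (P.coeff i * Q.coeff j)) := by
        noncomm_ring
    _ = 0 := by rw [key _ hmem, mul_zero]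

theorem coeff_mul_coeff_eq_zero_of_mem (hJ : ∀ b ∈ J, IsNilpotent b → b = 0)
    {P Q : B[X]} (hPQ : P * Q = 0) (hmem : ∀ i j, P.coeff i * Q.coeff j ∈ J) (i j : ℕ) :
    P.coeff i * Q.coeff j = 0 := by
  suffices H : ∀ k i j, i + j = k → P.coeff i * Q.coeff j = 0 from H _ i j rfl
  intro k
  induction k using Nat.strong_induction_on with | _ k ihk =>
  intro i j hk
  induction j using Nat.strong_induction_on generalizing i with | _ j ihj =>
  subst hk
  exact coeff_mul_coeff_eq_zero_of_lower hJ hPQ (fun i' j' h => ihk _ h i' j' rfl)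
    (fun i' j' h hj => ihj j' hj i' h) (hmem i j)

end ReducedIdeal

theorem IsArmendariz.map_coeff_mul_coeff_eq_zero {R S : Type*} [Ring R] [Ring S]
    (hS : IsArmendariz S) (g : R →+* S) {p q : R[X]} (hpq : p * q = 0) (i j : ℕ) :
    g (p.coeff i * q.coeff j) = 0 := by
  simpa [coeff_map] using
    hS (p.map g) (q.map g) (by rw [← Polynomial.map_mul, hpq, Polynomial.map_zero]) i j

theorem IsArmendariz.of_injective_s3 {R S : Type*} [Ring R] [Ring S] (hS : IsArmendariz S)
    {g : R →+* S} (hg : Function.Injective g) : IsArmendariz R :=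
  fun _ _ hpq i j => (map_eq_zero_iff g hg).1 (hS.map_coeff_mul_coeff_eq_zero g hpq i j)

section Amalgamation

variable {A B : Type*} [Ring A] [Ring B] (f : A →+* B) (J : TwoSidedIdeal B)

def toAmalgamation : A →+* amalgamation f J :=
  (RingHom.prod (RingHom.id A) f).codRestrict (amalgamation f J) fun a => by
    simp [amalgamation, J.zero_mem]

theorem toAmalgamation_injective : Function.Injective (toAmalgamation f J) :=
  fun _ _ h => congrArg (fun x : amalgamation f J => x.1.1) h

variable {f J}

theorem isArmendariz_amalgamation (hJ : ∀ b ∈ J, IsNilpotent b → b = 0) (hA : IsArmendariz A) :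
    IsArmendariz (amalgamation f J) := by
  intro p q hpq i j
  let π₁ := (RingHom.fst A B).comp (amalgamation f J).subtype
  let π₂ := (RingHom.snd A B).comp (amalgamation f J).subtype
  have hfst : π₁ (p.coeff i * q.coeff j) = 0 := hA.map_coeff_mul_coeff_eq_zero π₁ hpq i j
  have hsnd : π₂ (p.coeff i * q.coeff j) = 0 := by
    have hmem : ∀ i j, (p.map π₂).coeff i * (q.map π₂).coeff j ∈ J := by
      intro i j
      have h : π₂ (p.coeff i * q.coeff j) - f (π₁ (p.coeff i * q.coeff j)) ∈ J :=
        (p.coeff i * q.coeff j).2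
      rwa [hA.map_coeff_mul_coeff_eq_zero π₁ hpq i j, map_zero, sub_zero, map_mul,
        ← coeff_map, ← coeff_map] at h
    simpa [coeff_map] using coeff_mul_coeff_eq_zero_of_mem hJ
      (by rw [← Polynomial.map_mul, hpq, Polynomial.map_zero]) hmem i j
  exact Subtype.ext (Prod.ext hfst hsnd)

end Amalgamation

theorem stmt_3_general {A B : Type*} [Ring A] [Ring B] (f : A →+* B) (J : TwoSidedIdeal B)
    (h : ∀ b ∈ J, IsNilpotent b → b = 0) :
    IsArmendariz (amalgamation f J) ↔ IsArmendariz A :=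
  ⟨fun hS => hS.of_injective_s3 (toAmalgamation_injective f J), isArmendariz_amalgamation h⟩

theorem stmt_3 {A B : Type*} [Ring A] [Ring B] (f : A →+* B) (J : TwoSidedIdeal B)
    (hJ : (1 : B) ∉ J)
    (h : ∀ b ∈ J, IsNilpotent b → b = 0) :
    IsArmendariz (amalgamation f J) ↔ IsArmendariz A :=
  stmt_3_general f J h
end

section
/- Let A and B be associative rings with identity, f : A → B a ring homomorphism, and J a proper two-sided ideal of B. If the amalgamation A⋈fJ is a nil-Armendariz ring, then A is a nil-Armendariz ring. -/
open Polynomial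

theorem stmt_5 {A B : Type*} [Ring A] [Ring B] (f : A →+* B) (J : TwoSidedIdeal B)
    (hJ : (1 : B) ∉ J)
    (h : IsNilArmendariz (amalgamation f J)) :
    IsNilArmendariz A := by
  -- embedding ι : A → amalgamation, a ↦ (a, f a)
  let ι : A →+* amalgamation f J :=
    { toFun := fun a => ⟨(a, f a), by show f a - f a ∈ J; simpa using J.zero_mem⟩
      map_one' := by ext <;> simp
      map_mul' := fun a b => by ext <;> simp
      map_zero' := by ext <;> simp
      map_add' := fun a b => by ext <;> simp }
  -- retraction π : amalgamation → A
  let π : amalgamation f J →+* A := (RingHom.fst A B).comp (amalgamation f J).subtype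
  have hπι : ∀ x : A, π (ι x) = x := fun x => rfl
  intro p q hk i j
  have key := h (p.map ι) (q.map ι) ?_ i j
  · have h2 : IsNilpotent (π ((p.map ι).coeff i * (q.map ι).coeff j)) := key.map π
    simpa [Polynomial.coeff_map, map_mul, hπι] using h2
  · intro k
    rw [← Polynomial.map_mul, Polynomial.coeff_map]
    exact (hk k).map ι
end

section
/- Let A and B be associative rings with identity, f : A → B a ring homomorphism, and J a proper two-sided ideal of B. If A and the subring f(A)+J of B are both nil-Armendariz rings, then the amalgamation A⋈fJ is a nil-Armendariz ring. -/
open Polynomial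

lemma nilp_pair {R S : Type*} [Ring R] [Ring S] {a : R} {b : S}
    (ha : IsNilpotent a) (hb : IsNilpotent b) : IsNilpotent ((a, b) : R × S) := by
  obtain ⟨m, hm⟩ := ha
  obtain ⟨n, hn⟩ := hb
  refine ⟨m + n, ?_⟩
  have : ((a, b) : R × S) ^ (m + n) = (a ^ (m + n), b ^ (m + n)) := rfl
  rw [this, pow_add, pow_add, hm, hn, zero_mul, mul_zero]
  rfl

lemma nilp_of_coe {R : Type*} [Ring R] {S : Subring R} {x : S}
    (h : IsNilpotent (x : R)) : IsNilpotent x := by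
  obtain ⟨n, hn⟩ := h
  exact ⟨n, Subtype.ext (by push_cast [hn]; rfl)⟩

theorem stmt_6 {A B : Type*} [Ring A] [Ring B] (f : A →+* B) (J : TwoSidedIdeal B)
    (hJ : (1 : B) ∉ J)
    (hA : IsNilArmendariz A) (hB : IsNilArmendariz (imageAddIdeal f J)) :
    IsNilArmendariz (amalgamation f J) := by
  intro p q hpq i j
  -- the two projections
  set π₁ : (amalgamation f J) →+* A := (RingHom.fst A B).comp (amalgamation f J).subtype with hπ₁
  set π₂ : (amalgamation f J) →+* (imageAddIdeal f J) :=
    { toFun := fun x => ⟨x.1.2, ⟨x.1.1, x.2⟩⟩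
      map_one' := rfl
      map_mul' := fun x y => rfl
      map_zero' := rfl
      map_add' := fun x y => rfl } with hπ₂
  have hcoeA : ∀ (r : amalgamation f J) (n : ℕ), IsNilpotent r → IsNilpotent (π₁ r) :=
    fun r n h => h.map π₁
  have h1 : IsNilpotent ((p.map π₁).coeff i * (q.map π₁).coeff j) := by
    apply hA
    intro k
    rw [← Polynomial.map_mul, Polynomial.coeff_map]
    exact (hpq k).map π₁
  have h2 : IsNilpotent ((p.map π₂).coeff i * (q.map π₂).coeff j) := by
    apply hB
    intro k
    rw [← Polynomial.map_mul, Polynomial.coeff_map]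
    exact (hpq k).map π₂
  rw [Polynomial.coeff_map, Polynomial.coeff_map] at h1
  rw [Polynomial.coeff_map, Polynomial.coeff_map] at h2
  rw [← map_mul] at h1 h2
  apply nilp_of_coe
  have h2' : IsNilpotent (((π₂ (p.coeff i * q.coeff j) : imageAddIdeal f J) : B)) :=
    h2.map (imageAddIdeal f J).subtype
  have : ((p.coeff i * q.coeff j : amalgamation f J) : A × B) =
      (π₁ (p.coeff i * q.coeff j), ((π₂ (p.coeff i * q.coeff j) : imageAddIdeal f J) : B)) := rfl
  rw [this]
  exact nilp_pair h1 h2'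
end

section
/- Let A and B be associative rings with identity, f : A → B a ring homomorphism, and J a proper two-sided ideal of B. Assume J ⊆ nil(B), i.e., every element of J is nilpotent. Then the amalgamation A⋈fJ is a nil-Armendariz ring if and only if A is a nil-Armendariz ring. -/
open Polynomial

section Aux

variable {A B : Type*} [Ring A] [Ring B] (f : A →+* B) (J : TwoSidedIdeal B)

private lemma pow_sub_pow_mem (b c : B) (hb : b - c ∈ J) : ∀ n : ℕ, b ^ n - c ^ n ∈ J
  | 0 => by simp [J.zero_mem]
  | n + 1 => by
    have e : b ^ (n + 1) - c ^ (n + 1) = b * (b ^ n - c ^ n) + (b - c) * c ^ n := by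
      rw [mul_sub, sub_mul, pow_succ', pow_succ']
      abel
    rw [e]
    exact J.add_mem (J.mul_mem_left _ _ (pow_sub_pow_mem b c hb n))
      (J.mul_mem_right _ _ hb)

private lemma nilp_iff (h : ∀ b ∈ J, IsNilpotent b) (x : amalgamation f J) :
    IsNilpotent x ↔ IsNilpotent (x : A × B).1 := by
  constructor
  · rintro ⟨n, hn⟩
    exact ⟨n, congrArg (fun y : amalgamation f J => (y : A × B).1) hn⟩
  · rintro ⟨n, hn⟩
    have hx : (x : A × B).2 - f (x : A × B).1 ∈ J := x.2
    have h2 : (x : A × B).2 ^ n ∈ J := by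
      have := pow_sub_pow_mem J _ _ hx n
      rw [← map_pow, hn, map_zero, sub_zero] at this
      exact this
    obtain ⟨m, hm⟩ := h _ h2
    refine ⟨n * (m + 1), ?_⟩
    have h1 : (x : A × B).1 ^ (n * (m + 1)) = 0 := by
      rw [pow_mul, hn, zero_pow (Nat.succ_ne_zero m)]
    have h2' : (x : A × B).2 ^ (n * (m + 1)) = 0 := by
      rw [Nat.mul_succ, pow_add, pow_mul, hm, zero_mul]
    have key : (x : A × B) ^ (n * (m + 1)) = 0 := Prod.ext (by simpa using h1) (by simpa using h2')
    exact Subtype.ext (by push_cast; simpa using key)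

end Aux

theorem stmt_8 {A B : Type*} [Ring A] [Ring B] (f : A →+* B) (J : TwoSidedIdeal B)
    (hJ : (1 : B) ∉ J)
    (h : ∀ b ∈ J, IsNilpotent b) :
    IsNilArmendariz (amalgamation f J) ↔ IsNilArmendariz A := by
  set S := amalgamation f J
  let π : S →+* A := (RingHom.fst A B).comp S.subtype
  let ι : A →+* S :=
    { toFun := fun a => ⟨(a, f a), by show f a - f a ∈ J; simp [J.zero_mem]⟩
      map_one' := Subtype.ext (by simp)
      map_mul' := fun a b => Subtype.ext (by simp)
      map_zero' := Subtype.ext (by simp)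
      map_add' := fun a b => Subtype.ext (by simp) }
  constructor
  · intro hS p q hpq i j
    have key : ∀ k, IsNilpotent ((p.map ι * q.map ι).coeff k) := by
      intro k
      rw [← Polynomial.map_mul, Polynomial.coeff_map, nilp_iff f J h]
      exact hpq k
    have := hS (p.map ι) (q.map ι) key i j
    rw [Polynomial.coeff_map, Polynomial.coeff_map, ← map_mul, nilp_iff f J h] at this
    exact this
  · intro hA p q hpq i j
    have key : ∀ k, IsNilpotent ((p.map π * q.map π).coeff k) := by
      intro k
      rw [← Polynomial.map_mul, Polynomial.coeff_map]
      exact (nilp_iff f J h _).mp (hpq k)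
    have := hA (p.map π) (q.map π) key i j
    rw [Polynomial.coeff_map, Polynomial.coeff_map, ← map_mul] at this
    rw [nilp_iff f J h]
    exact this
end

section
/- Let A and B be associative rings with identity, f : A → B a ring homomorphism, and J a proper two-sided ideal of B. Assume f⁻¹(J) ⊆ nil(A), i.e., every element of A mapped into J by f is nilpotent. Then the amalgamation A⋈fJ is a nil-Armendariz ring if and only if the subring f(A)+J of B is a nil-Armendariz ring. -/
open Polynomial

/-!
The second projection `(a, b) ↦ b` maps `A ⋈^f J` onto `f(A) + J`, and its kernel
`{(a, 0) | f a ∈ J}` is nil by hypothesis. Nil-Armendariz transfers in both directions along a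
surjective ring hom with nil kernel: such a hom reflects nilpotency (if `φ x ^ n = 0` then `x ^ n`
lies in the kernel), and polynomials lift coefficientwise along it.
-/

section NilKernel

variable {R S : Type*} [Ring R] [Ring S] (φ : R →+* S)

theorem IsNilpotent.of_map_of_ker_nil (hker : ∀ x, φ x = 0 → IsNilpotent x) {x : R}
    (hx : IsNilpotent (φ x)) : IsNilpotent x := by
  obtain ⟨n, hn⟩ := hx
  exact (hker _ (by rw [map_pow, hn])).of_pow

theorem IsNilArmendariz.of_ker_nil (hS : IsNilArmendariz S)
    (hker : ∀ x, φ x = 0 → IsNilpotent x) : IsNilArmendariz R := by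
  intro p q hpq i j
  apply IsNilpotent.of_map_of_ker_nil φ hker
  rw [map_mul, ← coeff_map, ← coeff_map]
  refine hS _ _ (fun k => ?_) i j
  rw [← Polynomial.map_mul, coeff_map]
  exact (hpq k).map φ

theorem IsNilArmendariz.of_surjective_of_ker_nil (hR : IsNilArmendariz R)
    (hφ : Function.Surjective φ) (hker : ∀ x, φ x = 0 → IsNilpotent x) :
    IsNilArmendariz S := by
  intro p q hpq i j
  obtain ⟨P, rfl⟩ := map_surjective φ hφ p
  obtain ⟨Q, rfl⟩ := map_surjective φ hφ q
  rw [coeff_map, coeff_map, ← map_mul]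
  refine (hR P Q (fun k => ?_) i j).map φ
  apply IsNilpotent.of_map_of_ker_nil φ hker
  rw [← coeff_map, Polynomial.map_mul]
  exact hpq k

theorem isNilArmendariz_iff_of_surjective_of_ker_nil (hφ : Function.Surjective φ)
    (hker : ∀ x, φ x = 0 → IsNilpotent x) : IsNilArmendariz R ↔ IsNilArmendariz S :=
  ⟨fun hR => hR.of_surjective_of_ker_nil φ hφ hker, fun hS => hS.of_ker_nil φ hker⟩

end NilKernel

namespace amalgamation

variable {A B : Type*} [Ring A] [Ring B] (f : A →+* B) (J : TwoSidedIdeal B)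

def snd : amalgamation f J →+* imageAddIdeal f J :=
  ((RingHom.snd A B).comp (amalgamation f J).subtype).codRestrict (imageAddIdeal f J)
    fun x => ⟨(x : A × B).1, x.property⟩

theorem snd_surjective : Function.Surjective (snd f J) := by
  rintro ⟨b, a, hab⟩
  exact ⟨⟨(a, b), hab⟩, rfl⟩

theorem isNilpotent_of_snd_eq_zero (h : ∀ a : A, f a ∈ J → IsNilpotent a)
    (x : amalgamation f J) (hx : snd f J x = 0) : IsNilpotent x := by
  obtain ⟨⟨a, b⟩, hab⟩ := x
  obtain rfl : b = 0 := congrArg Subtype.val hx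
  have hfa : f a ∈ J := by simpa using J.neg_mem hab
  obtain ⟨m, hm⟩ := h a hfa
  rw [← IsNilpotent.map_iff (f := (amalgamation f J).subtype) Subtype.val_injective]
  exact ⟨m + 1, Prod.ext (by simp [pow_succ, hm]) (by simp)⟩

end amalgamation

theorem stmt_9_general {A B : Type*} [Ring A] [Ring B] (f : A →+* B) (J : TwoSidedIdeal B)
    (h : ∀ a : A, f a ∈ J → IsNilpotent a) :
    IsNilArmendariz (amalgamation f J) ↔ IsNilArmendariz (imageAddIdeal f J) :=
  isNilArmendariz_iff_of_surjective_of_ker_nil (amalgamation.snd f J)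
    (amalgamation.snd_surjective f J) (amalgamation.isNilpotent_of_snd_eq_zero f J h)

theorem stmt_9 {A B : Type*} [Ring A] [Ring B] (f : A →+* B) (J : TwoSidedIdeal B)
    (hJ : (1 : B) ∉ J)
    (h : ∀ a : A, f a ∈ J → IsNilpotent a) :
    IsNilArmendariz (amalgamation f J) ↔ IsNilArmendariz (imageAddIdeal f J) :=
  stmt_9_general f J h
end

section
/- Let A and B be associative rings with identity, f : A → B an injective ring homomorphism, and J a proper two-sided ideal of B. Assume f(A) ∩ J = {0}. Then the amalgamation A⋈fJ is a nil-Armendariz ring if and only if the subring f(A)+J of B is a nil-Armendariz ring. -/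
open Polynomial

/-- Nil-Armendariz transfers along ring isomorphisms. -/
lemma nilArmendariz_of_ringEquiv {R S : Type*} [Ring R] [Ring S] (e : R ≃+* S)
    (hR : IsNilArmendariz R) : IsNilArmendariz S := by
  intro p q hpq i j
  have h1 : ∀ k, IsNilpotent (((p.map (e.symm : S →+* R)) *
      (q.map (e.symm : S →+* R))).coeff k) := by
    intro k
    rw [← Polynomial.map_mul, Polynomial.coeff_map]
    exact (hpq k).map (e.symm : S →+* R)
  have h2 := hR _ _ h1 i j
  have h3 := h2.map (e : R →+* S)
  simpa [Polynomial.coeff_map, map_mul] using h3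

theorem stmt_10 {A B : Type*} [Ring A] [Ring B] (f : A →+* B) (J : TwoSidedIdeal B)
    (hJ : (1 : B) ∉ J)
    (hf : Function.Injective f) (h : ∀ a : A, f a ∈ J → f a = 0) :
    IsNilArmendariz (amalgamation f J) ↔ IsNilArmendariz (imageAddIdeal f J) := by
  -- the second projection is a ring isomorphism from the amalgamation to f(A)+J
  let φ : amalgamation f J →+* imageAddIdeal f J :=
    { toFun := fun x => ⟨x.1.2, x.1.1, x.2⟩
      map_one' := rfl
      map_mul' := fun x y => rfl
      map_zero' := rfl
      map_add' := fun x y => rfl }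
  have hbij : Function.Bijective φ := by
    constructor
    · rintro ⟨⟨a, b⟩, hab⟩ ⟨⟨a', b'⟩, hab'⟩ hxy
      have hb : b = b' := congrArg Subtype.val hxy
      subst hb
      have hmem : b - f a ∈ J := hab
      have hmem' : b - f a' ∈ J := hab'
      have : f (a - a') ∈ J := by
        have e : f (a - a') = (b - f a') - (b - f a) := by rw [map_sub]; abel
        rw [e]; exact J.sub_mem hmem' hmem
      have h0 : f (a - a') = 0 := h _ this
      have haa : a = a' := by
        apply hf
        rw [map_sub, sub_eq_zero] at h0
        exact h0
      simp [haa]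
    · rintro ⟨b, a, hab⟩
      exact ⟨⟨(a, b), hab⟩, rfl⟩
  let e : amalgamation f J ≃+* imageAddIdeal f J := RingEquiv.ofBijective φ hbij
  constructor
  · exact nilArmendariz_of_ringEquiv e
  · exact nilArmendariz_of_ringEquiv e.symm
end

section
/- Let A and B be associative rings with identity, f : A → B an injective ring homomorphism, and J a proper two-sided ideal of B. Assume J ⊆ nil(B), i.e., every element of J is nilpotent. Then the amalgamation A⋈fJ is a nil-Armendariz ring if and only if the subring f(A)+J of B is a nil-Armendariz ring. -/
open Polynomial

section Aux

variable {A B : Type*} [Ring A] [Ring B]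

lemma pow_sub_mem (J : TwoSidedIdeal B) {y z : B} (hyz : y - z ∈ J) :
    ∀ m : ℕ, y ^ m - z ^ m ∈ J := by
  intro m
  induction m with
  | zero => simpa using J.zero_mem
  | succ n ih =>
    have e : y ^ (n + 1) - z ^ (n + 1) = y ^ n * (y - z) + (y ^ n - z ^ n) * z := by
      rw [pow_succ, pow_succ]; noncomm_ring
    rw [e]
    exact J.add_mem (J.mul_mem_left _ _ hyz) (J.mul_mem_right _ _ ih)

lemma subring_isNilpotent_iff {R : Type*} [Ring R] {S : Subring R} (s : S) :
    IsNilpotent s ↔ IsNilpotent (s : R) := by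
  constructor
  · rintro ⟨n, hn⟩
    refine ⟨n, ?_⟩
    have : ((s ^ n : S) : R) = (s : R) ^ n := by push_cast; rfl
    rw [← this, hn]; rfl
  · rintro ⟨n, hn⟩
    refine ⟨n, ?_⟩
    have : ((s ^ n : S) : R) = (s : R) ^ n := by push_cast; rfl
    exact Subtype.ext (by rw [this, hn]; rfl)

lemma prod_isNilpotent {R S : Type*} [Ring R] [Ring S] {x : R} {y : S}
    (hx : IsNilpotent x) (hy : IsNilpotent y) : IsNilpotent (x, y) := by
  obtain ⟨n, hn⟩ := hx
  obtain ⟨m, hm⟩ := hy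
  refine ⟨n + m, ?_⟩
  have h1 : x ^ (n + m) = 0 := by rw [pow_add, hn, zero_mul]
  have h2 : y ^ (n + m) = 0 := by rw [pow_add, hm, mul_zero]
  rw [Prod.pow_def, h1, h2]; rfl

/-- Key lemma: an element of the amalgamation is nilpotent iff its second component is. -/
lemma amalg_nilpotent_iff (f : A →+* B) (J : TwoSidedIdeal B) (hJ : (1 : B) ∉ J)
    (hf : Function.Injective f) (h : ∀ b ∈ J, IsNilpotent b)
    (s : amalgamation f J) : IsNilpotent s ↔ IsNilpotent (s : A × B).2 := by
  have hB : Nontrivial B := ⟨1, 0, fun h10 => hJ (h10 ▸ J.zero_mem)⟩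
  rw [subring_isNilpotent_iff]
  constructor
  · rintro ⟨n, hn⟩
    exact ⟨n, by rw [← Prod.pow_snd, hn]; rfl⟩
  · rintro hy
    obtain ⟨⟨x, y⟩, hmem'⟩ := s
    have hmem : y - f x ∈ J := hmem'
    simp only at hy ⊢
    obtain ⟨m, hm⟩ := hy
    -- (f x)^m ∈ J
    have hfxm : (f x) ^ m ∈ J := by
      have := pow_sub_mem J hmem m
      rw [hm] at this
      simpa using J.neg_mem this
    have hfx : IsNilpotent (f x) := IsNilpotent.of_pow (h _ hfxm)
    have hx : IsNilpotent x := by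
      obtain ⟨k, hk⟩ := hfx
      exact ⟨k, hf (by rw [map_pow, hk, map_zero])⟩
    exact prod_isNilpotent hx ⟨m, hm⟩

end Aux

lemma nilArm_of_surj {S T : Type*} [Ring S] [Ring T] (φ : S →+* T)
    (hsurj : Function.Surjective φ)
    (hrefl : ∀ s : S, IsNilpotent (φ s) → IsNilpotent s) :
    IsNilArmendariz S ↔ IsNilArmendariz T := by
  choose σ hσ using hsurj
  have key : ∀ p : T[X], ∀ k : ℕ,
      φ ((∑ n ∈ p.support, Polynomial.monomial n (σ (p.coeff n))).coeff k) = p.coeff k := by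
    intro p k
    rw [Polynomial.finset_sum_coeff]
    simp only [Polynomial.coeff_monomial]
    rw [Finset.sum_ite_eq' p.support k (fun n => σ (p.coeff n))]
    by_cases hk : k ∈ p.support
    · rw [if_pos hk, hσ]
    · rw [if_neg hk, map_zero, eq_comm]
      exact Polynomial.notMem_support_iff.mp hk
  constructor
  · intro hS p q hpq i j
    set P : S[X] := ∑ n ∈ p.support, Polynomial.monomial n (σ (p.coeff n)) with hP
    set Q : S[X] := ∑ n ∈ q.support, Polynomial.monomial n (σ (q.coeff n)) with hQ
    have hPmap : P.map φ = p := by ext k; rw [Polynomial.coeff_map]; exact key p k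
    have hQmap : Q.map φ = q := by ext k; rw [Polynomial.coeff_map]; exact key q k
    have hPQ : ∀ k : ℕ, IsNilpotent ((P * Q).coeff k) := by
      intro k
      apply hrefl
      rw [← Polynomial.coeff_map, Polynomial.map_mul, hPmap, hQmap]
      exact hpq k
    have hnil := (hS P Q hPQ i j).map φ
    rwa [map_mul, key p i, key q j] at hnil
  · intro hT p q hpq i j
    apply hrefl
    rw [map_mul]
    have := hT (p.map φ) (q.map φ) (fun k => by
      rw [← Polynomial.map_mul, Polynomial.coeff_map]; exact (hpq k).map φ) i j
    rwa [Polynomial.coeff_map, Polynomial.coeff_map] at this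

theorem stmt_11 {A B : Type*} [Ring A] [Ring B] (f : A →+* B) (J : TwoSidedIdeal B)
    (hJ : (1 : B) ∉ J)
    (hf : Function.Injective f) (h : ∀ b ∈ J, IsNilpotent b) :
    IsNilArmendariz (amalgamation f J) ↔ IsNilArmendariz (imageAddIdeal f J) := by
  have hsnd : ∀ s : amalgamation f J, ((s : A × B).2 : B) ∈ imageAddIdeal f J :=
    fun s => ⟨(s : A × B).1, s.2⟩
  let π : amalgamation f J →+* imageAddIdeal f J :=
  { toFun := fun s => ⟨(s : A × B).2, hsnd s⟩,
    map_one' := rfl, map_mul' := fun _ _ => rfl,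
    map_zero' := rfl, map_add' := fun _ _ => rfl }
  apply nilArm_of_surj π
  · rintro ⟨t, a, ha⟩
    exact ⟨⟨(a, t), ha⟩, rfl⟩
  · intro s hns
    rw [amalg_nilpotent_iff f J hJ hf h]
    rw [subring_isNilpotent_iff] at hns
    exact hns
end

section
/- Let A and B be associative rings with identity, f : A → B a ring homomorphism, and J a proper two-sided ideal of B. If the amalgamation A⋈fJ is a weak Armendariz ring, then A is a weak Armendariz ring. -/
open Polynomial

theorem stmt_12 {A B : Type*} [Ring A] [Ring B] (f : A →+* B) (J : TwoSidedIdeal B)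
    (hJ : (1 : B) ∉ J)
    (h : IsWeakArmendariz (amalgamation f J)) :
    IsWeakArmendariz A := by
  intro p q hpq i j
  -- the embedding a ↦ (a, f a) into the amalgamation
  let ι : A →+* amalgamation f J :=
    { toFun := fun a => ⟨(a, f a), by show f a - f a ∈ J; simp [J.zero_mem]⟩
      map_one' := by ext <;> simp
      map_mul' := fun a b => by ext <;> simp
      map_zero' := by ext <;> simp
      map_add' := fun a b => by ext <;> simp }
  have hmap : (p.map ι) * (q.map ι) = 0 := by
    rw [← Polynomial.map_mul, hpq, Polynomial.map_zero]
  have hn := h (p.map ι) (q.map ι) hmap i j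
  rw [Polynomial.coeff_map, Polynomial.coeff_map, ← map_mul] at hn
  -- project to A via fst
  let π : amalgamation f J →+* A := (RingHom.fst A B).comp (amalgamation f J).subtype
  have := hn.map π
  simpa [π, ι] using this
end

section
/- Let A and B be associative rings with identity, f : A → B a ring homomorphism, and J a proper two-sided ideal of B. If A and the subring f(A)+J of B are both weak Armendariz rings, then the amalgamation A⋈fJ is a weak Armendariz ring. -/
open Polynomial

/-!
Sending `(a, b) ↦ (a, b)` embeds `A ⋈^f J` into the product ring `A × (f(A) + J)`, and the
weak Armendariz property passes to products (project a relation `p * q = 0` to each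
factor) and along injective ring homomorphisms (push `p * q = 0` forward).
-/

theorem Prod.isNilpotent_of_fst_of_snd {R S : Type*} [MonoidWithZero R] [MonoidWithZero S]
    {x : R × S} (h₁ : IsNilpotent x.1) (h₂ : IsNilpotent x.2) : IsNilpotent x := by
  obtain ⟨m, hm⟩ := h₁
  obtain ⟨n, hn⟩ := h₂
  exact ⟨max m n, Prod.ext (pow_eq_zero_of_le (le_max_left m n) hm)
    (pow_eq_zero_of_le (le_max_right m n) hn)⟩

namespace IsWeakArmendariz

variable {R S : Type*} [Ring R] [Ring S]

theorem of_injective (hS : IsWeakArmendariz S) {g : R →+* S} (hg : Function.Injective g) :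
    IsWeakArmendariz R := by
  intro p q hpq i j
  have h := hS (p.map g) (q.map g) (by rw [← Polynomial.map_mul, hpq, Polynomial.map_zero]) i j
  rwa [coeff_map, coeff_map, ← map_mul, IsNilpotent.map_iff hg] at h

theorem prod (hR : IsWeakArmendariz R) (hS : IsWeakArmendariz S) :
    IsWeakArmendariz (R × S) := by
  intro p q hpq i j
  have hR' := hR (p.map (RingHom.fst R S)) (q.map (RingHom.fst R S))
    (by rw [← Polynomial.map_mul, hpq, Polynomial.map_zero]) i j
  have hS' := hS (p.map (RingHom.snd R S)) (q.map (RingHom.snd R S))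
    (by rw [← Polynomial.map_mul, hpq, Polynomial.map_zero]) i j
  simp only [coeff_map, ← map_mul] at hR' hS'
  exact Prod.isNilpotent_of_fst_of_snd hR' hS'

end IsWeakArmendariz

section Amalgamation

variable {A B : Type*} [Ring A] [Ring B] (f : A →+* B) (J : TwoSidedIdeal B)

def amalgamationToProd : amalgamation f J →+* A × imageAddIdeal f J :=
  ((RingHom.fst A B).comp (amalgamation f J).subtype).prod
    (((RingHom.snd A B).comp (amalgamation f J).subtype).codRestrict (imageAddIdeal f J)
      fun x => ⟨(x : A × B).1, x.2⟩)

theorem amalgamationToProd_injective : Function.Injective (amalgamationToProd f J) :=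
  fun _ _ h => Subtype.ext <|
    Prod.ext (congrArg (fun z : A × imageAddIdeal f J => z.1) h)
      (congrArg (fun z : A × imageAddIdeal f J => (z.2 : B)) h)

end Amalgamation

theorem stmt_13_general {A B : Type*} [Ring A] [Ring B] (f : A →+* B) (J : TwoSidedIdeal B)
    (hA : IsWeakArmendariz A) (hB : IsWeakArmendariz (imageAddIdeal f J)) :
    IsWeakArmendariz (amalgamation f J) :=
  (hA.prod hB).of_injective (amalgamationToProd_injective f J)

theorem stmt_13 {A B : Type*} [Ring A] [Ring B] (f : A →+* B) (J : TwoSidedIdeal B)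
    (hJ : (1 : B) ∉ J)
    (hA : IsWeakArmendariz A) (hB : IsWeakArmendariz (imageAddIdeal f J)) :
    IsWeakArmendariz (amalgamation f J) :=
  stmt_13_general f J hA hB
end

section
/- Let A and B be associative rings with identity, f : A → B an injective ring homomorphism, and J a proper two-sided ideal of B. Assume J ⊆ nil(B), i.e., every element of J is nilpotent. If the subring f(A)+J of B is a weak Armendariz ring, then the amalgamation A⋈fJ is a weak Armendariz ring. -/
open Polynomial

theorem stmt_17 {A B : Type*} [Ring A] [Ring B] (f : A →+* B) (J : TwoSidedIdeal B)
    (hJ : (1 : B) ∉ J)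
    (hf : Function.Injective f) (h : ∀ b ∈ J, IsNilpotent b)
    (hB : IsWeakArmendariz (imageAddIdeal f J)) :
    IsWeakArmendariz (amalgamation f J) := by
  classical
  -- key lemma: nilpotency transfers across differences in the nil ideal J
  have key : ∀ u v : B, u - v ∈ J → IsNilpotent u → IsNilpotent v := by
    intro u v huv hu
    let π : B →+* J.ringCon.Quotient := J.ringCon.mk'
    have hπv : IsNilpotent (π v) := by
      have e : π u = π v := Quotient.sound ((J.rel_iff u v).mpr huv)
      exact e ▸ hu.map π
    obtain ⟨m, hm⟩ := hπv
    have hvm : v ^ m ∈ J := by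
      rw [J.mem_iff]
      have e : π (v ^ m) = π 0 := by rw [map_pow, hm, map_zero]
      exact Quotient.exact e
    obtain ⟨k, hk⟩ := h _ hvm
    exact ⟨m * k, by rw [pow_mul]; exact hk⟩
  -- projection onto the second coordinate, landing in f(A) + J
  let φ : amalgamation f J →+* imageAddIdeal f J :=
  { toFun := fun x => ⟨x.val.2, x.val.1, x.prop⟩
    map_one' := rfl
    map_mul' := fun x y => rfl
    map_zero' := rfl
    map_add' := fun x y => rfl }
  intro p q hpq i j
  have h2 : (p.map φ) * (q.map φ) = 0 := by
    rw [← Polynomial.map_mul, hpq, Polynomial.map_zero]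
  have hn := hB _ _ h2 i j
  rw [Polynomial.coeff_map, Polynomial.coeff_map, ← map_mul] at hn
  set x : amalgamation f J := p.coeff i * q.coeff j with hx
  -- second component of x is nilpotent in B
  obtain ⟨n, hn⟩ := hn
  have hb : IsNilpotent (x.val.2 : B) := ⟨n, congrArg Subtype.val hn⟩
  -- hence f of the first component is nilpotent in B
  have hfa : IsNilpotent (f x.val.1) := key _ _ x.prop hb
  obtain ⟨m, hm⟩ := hfa
  have ha : IsNilpotent x.val.1 := ⟨m, hf (by rw [map_pow, hm, map_zero])⟩
  obtain ⟨n1, hn1⟩ := ha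
  obtain ⟨n2, hn2⟩ := hb
  refine ⟨n1 + n2, ?_⟩
  have : (x : A × B) ^ (n1 + n2) = 0 := by
    rw [Prod.ext_iff]
    constructor
    · show (x : A × B).1 ^ (n1 + n2) = 0
      rw [pow_add, hn1, zero_mul]
    · show (x : A × B).2 ^ (n1 + n2) = 0
      rw [pow_add, hn2, mul_zero]
  exact Subtype.ext (by push_cast; exact this)
end
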